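/- Let L' be a positive integer and let h₁, h₂ > 0 with h₁ + h₂ = 1/L'. Then (1/L'²)·((sin(π h₁ L')/sin(π h₁))² + (sin(π h₂ L')/sin(π h₂))²) ≥ 8/π². -/

import Mathlib

set_option maxHeartbeats 1000000
open Real

lemma keyB (x : ℝ) (hx0 : 0 < x) (hx2 : x ≤ 1/2) :
    8 ≤ Real.sin (π*x)^2 * (1/x^2 + 1/(1-x)^2) := by
  have h1x : 0 < 1 - x := by linarith
  have hπ := Real.pi_gt_d6
  have hπ' := Real.pi_lt_d6
  have hπ2u : π^2 ≤ 9.8697 := by nlinarith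
  have hπ2l : (9.8696 : ℝ) ≤ π^2 := by nlinarith
  rcases le_or_gt x (1/5) with h | h
  · -- small x: sin(πx)^2 ≥ 8 x^2
    have ht0 : 0 < π * x := by positivity
    have ht1 : π * x ≤ 1 := by nlinarith
    have hs : π * x - (π * x) ^ 3 / 4 < Real.sin (π * x) := by
      have := Real.sin_gt_sub_cube ht0; nlinarith [pow_pos ht0 3]
    have hp3 : π^3 ≤ 31.0063 := by nlinarith [Real.pi_pos]
    have hc : π^3 * x^2 / 4 ≤ 0.310063 := by nlinarith [sq_nonneg x]
    have hd : (2.8285 : ℝ) ≤ π - π^3*x^2/4 := by linarith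
    have hpos : 0 < π*x - (π*x)^3/4 := by nlinarith [sq_nonneg x, mul_pos hx0 hx0]
    have hsq : (8:ℝ) ≤ (π - π^3*x^2/4)^2 := by nlinarith [hd, sq_nonneg (π - π^3*x^2/4 - 2.8285)]
    have h8 : 8*x^2 ≤ (π*x - (π*x)^3/4)^2 := by
      have := mul_le_mul_of_nonneg_left hsq (sq_nonneg x)
      nlinarith [this]
    have hsin2 : 8*x^2 ≤ Real.sin (π*x)^2 := by nlinarith
    have h1 : 8 ≤ Real.sin (π*x)^2 / x^2 := by
      rw [le_div_iff₀ (by positivity)]; linarith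
    have h2 : 0 ≤ Real.sin (π*x)^2 / (1-x)^2 := by positivity
    calc (8:ℝ) ≤ Real.sin (π*x)^2 / x^2 + Real.sin (π*x)^2 / (1-x)^2 := by linarith
    _ = Real.sin (π*x)^2 * (1/x^2 + 1/(1-x)^2) := by ring
  · -- x ∈ (1/5, 1/2]
    set u := 1/2 - x with hu_def
    have hu0 : 0 ≤ u := by simp [hu_def]; linarith
    have hu : u < 3/10 := by simp [hu_def]; linarith
    have hu2 : u^2 ≤ 9/100 := by nlinarith
    have hsin : Real.sin (π*x) = Real.cos (π*u) := by
      rw [show π*x = π/2 - π*u by rw [hu_def]; ring, Real.sin_pi_div_two_sub]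
    have hq : 1 - (π*u)^2/2 ≤ Real.cos (π*u) := Real.one_sub_sq_div_two_le_cos
    have hqpos : 0 < 1 - (π*u)^2/2 := by
      nlinarith [mul_nonneg (sub_nonneg.2 hπ2u) (sub_nonneg.2 hu2), sq_nonneg u]
    have hcos2 : (1 - (π*u)^2/2)^2 ≤ Real.cos (π*u)^2 := pow_le_pow_left₀ hqpos.le hq 2
    have expand : 1/x^2 + 1/(1-x)^2 = ((1-x)^2 + x^2)/(x^2*(1-x)^2) := by
      field_simp
    rw [hsin, expand, ← mul_div_assoc, le_div_iff₀ (by positivity)]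
    have hx_eq : x = 1/2 - u := by rw [hu_def]; ring
    rw [hx_eq]
    nlinarith [hcos2, sq_nonneg u, hu2, mul_nonneg hu0 hu0,
      mul_nonneg (mul_nonneg hu0 hu0) hu0, sq_nonneg (u*u),
      mul_nonneg (mul_nonneg (mul_nonneg hu0 hu0) hu0) hu0,
      mul_nonneg (mul_nonneg hu0 hu0) (sq_nonneg (u^2 - 9/100)),
      mul_nonneg (sub_nonneg.2 hπ2u) (sub_nonneg.2 hu2),
      mul_nonneg (mul_nonneg hu0 hu0) (mul_nonneg (sub_nonneg.2 hπ2u) (sub_nonneg.2 hu2))]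

lemma keyA (x : ℝ) (hx0 : 0 < x) (hx1 : x < 1) :
    8 ≤ Real.sin (π*x)^2 * (1/x^2 + 1/(1-x)^2) := by
  rcases le_or_gt x (1/2) with h | h
  · exact keyB x hx0 h
  · have h' := keyB (1-x) (by linarith) (by linarith)
    have hs : Real.sin (π*(1-x)) = Real.sin (π*x) := by
      rw [show π*(1-x) = π - π*x by ring, Real.sin_pi_sub]
    rw [hs, show (1 - (1-x)) = x by ring] at h'
    linarith [h']

theorem adjacent_points_probability_sum (L' : ℕ) (hL : 0 < L') (h₁ h₂ : ℝ)
    (hh₁ : 0 < h₁) (hh₂ : 0 < h₂) (hsum : h₁ + h₂ = 1 / L') :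
    (1 / (L' : ℝ) ^ 2) *
        ((Real.sin (π * h₁ * L') / Real.sin (π * h₁)) ^ 2 +
          (Real.sin (π * h₂ * L') / Real.sin (π * h₂)) ^ 2)
      ≥ 8 / π ^ 2 := by
  have hLpos : (0:ℝ) < L' := by exact_mod_cast hL
  have hL1 : (1:ℝ) ≤ L' := by exact_mod_cast hL
  set x := h₁ * L' with hx_def
  have hx0 : 0 < x := by positivity
  have hsum' : h₂ * L' = 1 - x := by
    have : h₂ = 1 / L' - h₁ := by linarith
    rw [this, hx_def]; field_simp
  have hx1 : x < 1 := by nlinarith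
  have hh₁1 : h₁ < 1 := by
    calc h₁ ≤ h₁ * L' := le_mul_of_one_le_right hh₁.le hL1
    _ < 1 := hx1
  have hh₂1 : h₂ < 1 := by
    calc h₂ ≤ h₂ * L' := le_mul_of_one_le_right hh₂.le hL1
    _ < 1 := by rw [hsum']; linarith
  have hπ := Real.pi_pos
  have hs1 : 0 < Real.sin (π * h₁) :=
    Real.sin_pos_of_pos_of_lt_pi (by positivity) (by nlinarith)
  have hs2 : 0 < Real.sin (π * h₂) :=
    Real.sin_pos_of_pos_of_lt_pi (by positivity) (by nlinarith)
  have e1 : π * h₁ * L' = π * x := by rw [hx_def]; ring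
  have e2 : Real.sin (π * h₂ * (L':ℝ)) = Real.sin (π * x) := by
    rw [show π * h₂ * (L':ℝ) = π * (h₂ * L') by ring, hsum',
      show π * (1 - x) = π - π * x by ring, Real.sin_pi_sub]
  have hsx : 0 < Real.sin (π * x) :=
    Real.sin_pos_of_pos_of_lt_pi (by positivity) (by nlinarith)
  -- sin (π hᵢ) ≤ π hᵢ
  have hb1 : (L':ℝ) * Real.sin (π * h₁) ≤ π * x := by
    have := (Real.sin_lt (x := π * h₁) (by positivity)).le
    calc (L':ℝ) * Real.sin (π * h₁) ≤ (L':ℝ) * (π * h₁) := by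
          exact mul_le_mul_of_nonneg_left this hLpos.le
    _ = π * x := by rw [hx_def]; ring
  have hb2 : (L':ℝ) * Real.sin (π * h₂) ≤ π * (1 - x) := by
    have := (Real.sin_lt (x := π * h₂) (by positivity)).le
    calc (L':ℝ) * Real.sin (π * h₂) ≤ (L':ℝ) * (π * h₂) := by
          exact mul_le_mul_of_nonneg_left this hLpos.le
    _ = π * (1 - x) := by rw [← hsum']; ring
  have hd1 : Real.sin (π * x) / (π * x) ≤ Real.sin (π * x) / ((L':ℝ) * Real.sin (π * h₁)) :=
    div_le_div_of_nonneg_left hsx.le (by positivity) hb1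
  have hd2 : Real.sin (π * x) / (π * (1 - x)) ≤ Real.sin (π * x) / ((L':ℝ) * Real.sin (π * h₂)) :=
    div_le_div_of_nonneg_left hsx.le (by positivity) hb2
  have hq1 : (Real.sin (π * x) / (π * x))^2 ≤ (Real.sin (π * x) / ((L':ℝ) * Real.sin (π * h₁)))^2 :=
    pow_le_pow_left₀ (by positivity) hd1 2
  have hq2 : (Real.sin (π * x) / (π * (1 - x)))^2 ≤ (Real.sin (π * x) / ((L':ℝ) * Real.sin (π * h₂)))^2 :=
    pow_le_pow_left₀ (div_nonneg hsx.le (by nlinarith)) hd2 2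
  have key := keyA x hx0 hx1
  have hstep : 8 / π^2 ≤ (Real.sin (π * x) / (π * x))^2 + (Real.sin (π * x) / (π * (1-x)))^2 := by
    have heq : (Real.sin (π * x) / (π * x))^2 + (Real.sin (π * x) / (π * (1-x)))^2
        = Real.sin (π*x)^2 * (1/x^2 + 1/(1-x)^2) / π^2 := by
      have hne : (1:ℝ) - x ≠ 0 := by linarith
      have hxne : x ≠ 0 := ne_of_gt hx0
      field_simp
    rw [heq]
    gcongr
  have hre : (1 / (L' : ℝ) ^ 2) *
        ((Real.sin (π * h₁ * L') / Real.sin (π * h₁)) ^ 2 +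
          (Real.sin (π * h₂ * L') / Real.sin (π * h₂)) ^ 2)
      = (Real.sin (π * x) / ((L':ℝ) * Real.sin (π * h₁)))^2
        + (Real.sin (π * x) / ((L':ℝ) * Real.sin (π * h₂)))^2 := by
    rw [e1, e2]
    field_simp
  rw [ge_iff_le, hre]
  linarith [hq1, hq2, hstep]
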